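/- arXiv:1503.03047 — 3 statements merged into one kernel-verified Lean document; each statement's English description precedes it below -/
import Mathlib

section
/- Let P = P̄ + ΔP where P̄ ∈ ℝ^{m×m} is a row-stochastic matrix, ΔP ∈ ℝ^{m×m} has zero row sums, and W_1, ..., W_m are square matrices of equal size. Set α_r = ‖W_r ⊗ W_r‖_∞. If for every column index s, Σ_{r=1}^m α_r |Δp_{rs}| < 1 − Σ_{r=1}^m α_r p̄_{rs}, then ρ((Pᵀ ⊗ I) diag(W_j ⊗ W_j)) < 1. -/
open Matrix Kronecker

/-- Maximum absolute row sum (infinity) norm of a matrix. -/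
noncomputable def infNorm {m n : Type*} [Fintype m] [Fintype n] (A : Matrix m n ℝ) : ℝ :=
  ⨆ i, ∑ j, |A i j|

/-- Spectral radius of a real square matrix: largest modulus of a complex eigenvalue
(root of the characteristic polynomial over ℂ). -/
noncomputable def specRad {n : Type*} [Fintype n] [DecidableEq n] (A : Matrix n n ℝ) : ℝ :=
  sSup {r : ℝ | ∃ μ : ℂ, (A.map (algebraMap ℝ ℂ)).charpoly.IsRoot μ ∧ r = ‖μ‖}

/-- A matrix is row-stochastic if its entries are nonnegative and each row sums to `1`. -/
def RowStochastic {m : Type*} [Fintype m] (P : Matrix m m ℝ) : Prop :=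
  (∀ i j, 0 ≤ P i j) ∧ ∀ i, ∑ j, P i j = 1

/-- The matrix `(Pᵀ ⊗ I) diag(W_j ⊗ W_j)`: its `(s, r)` block is `p_{rs} (W_r ⊗ W_r)`. -/
noncomputable def bigM {m n : ℕ} (P : Matrix (Fin m) (Fin m) ℝ)
    (W : Fin m → Matrix (Fin n) (Fin n) ℝ) :
    Matrix (Fin m × (Fin n × Fin n)) (Fin m × (Fin n × Fin n)) ℝ :=
  Matrix.of fun p q => P q.1 p.1 * (W q.1 ⊗ₖ W q.1) p.2 q.2

theorem Matrix.exists_norm_le_sum_norm_of_isRoot_charpoly {K ι : Type*} [NormedField K]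
    [Fintype ι] [DecidableEq ι] {A : Matrix ι ι K} {μ : K} (hμ : A.charpoly.IsRoot μ) :
    ∃ i, ‖μ‖ ≤ ∑ j, ‖A i j‖ := by
  have hμ' : Module.End.HasEigenvalue (toLin' A) μ := by
    rw [Module.End.hasEigenvalue_iff_mem_spectrum, spectrum_toLin']
    exact mem_spectrum_of_isRoot_charpoly hμ
  obtain ⟨i, hi⟩ := eigenvalue_mem_ball hμ'
  refine ⟨i, ?_⟩
  rw [← Finset.add_sum_erase _ _ (Finset.mem_univ i)]
  calc ‖μ‖ ≤ ‖A i i‖ + ‖μ - A i i‖ := norm_le_insert' _ _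
    _ ≤ _ := by gcongr; rwa [← dist_eq_norm, ← Metric.mem_closedBall]

section infNorm

variable {ι κ : Type*} [Fintype ι] [Fintype κ]

theorem infNorm_nonneg (A : Matrix ι κ ℝ) : 0 ≤ infNorm A :=
  Real.iSup_nonneg fun _ => Finset.sum_nonneg fun _ _ => abs_nonneg _

theorem sum_abs_le_infNorm (A : Matrix ι κ ℝ) (i : ι) : ∑ j, |A i j| ≤ infNorm A :=
  le_ciSup (f := fun i => ∑ j, |A i j|) (Set.finite_range _).bddAbove i

theorem infNorm_lt_of_forall_sum_abs_lt {A : Matrix ι κ ℝ} {c : ℝ} (hc : 0 < c)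
    (h : ∀ i, ∑ j, |A i j| < c) : infNorm A < c := by
  cases isEmpty_or_nonempty ι
  · rwa [infNorm, Real.iSup_of_isEmpty]
  · obtain ⟨i, hi⟩ := exists_eq_ciSup_of_finite (f := fun i => ∑ j, |A i j|)
    rw [infNorm, ← hi]
    exact h i

theorem specRad_le_infNorm [DecidableEq ι] (A : Matrix ι ι ℝ) : specRad A ≤ infNorm A := by
  refine Real.sSup_le ?_ (infNorm_nonneg A)
  rintro r ⟨μ, hμ, rfl⟩
  obtain ⟨i, hi⟩ := exists_norm_le_sum_norm_of_isRoot_charpoly hμ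
  refine hi.trans (le_of_eq_of_le ?_ (sum_abs_le_infNorm A i))
  simp

end infNorm

theorem sum_abs_bigM_row_le {m n : ℕ} (P : Matrix (Fin m) (Fin m) ℝ)
    (W : Fin m → Matrix (Fin n) (Fin n) ℝ) (s : Fin m) (ij : Fin n × Fin n) :
    ∑ q, |bigM P W (s, ij) q| ≤ ∑ r, |P r s| * infNorm (W r ⊗ₖ W r) := by
  rw [Fintype.sum_prod_type]
  gcongr with r
  simp only [bigM, of_apply, abs_mul, ← Finset.mul_sum]
  gcongr
  exact sum_abs_le_infNorm _ ij

theorem stmt4_general {m n : ℕ} (Pbar ΔP : Matrix (Fin m) (Fin m) ℝ)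
    (W : Fin m → Matrix (Fin n) (Fin n) ℝ)
    (hPbar : RowStochastic Pbar)
    (h : ∀ s, ∑ r, infNorm (W r ⊗ₖ W r) * |ΔP r s|
        < 1 - ∑ r, infNorm (W r ⊗ₖ W r) * Pbar r s) :
    specRad (bigM (Pbar + ΔP) W) < 1 := by
  refine (specRad_le_infNorm _).trans_lt (infNorm_lt_of_forall_sum_abs_lt one_pos ?_)
  rintro ⟨s, ij⟩
  calc _ ≤ ∑ r, |(Pbar + ΔP) r s| * infNorm (W r ⊗ₖ W r) := sum_abs_bigM_row_le _ W s ij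
    _ ≤ ∑ r, infNorm (W r ⊗ₖ W r) * Pbar r s + ∑ r, infNorm (W r ⊗ₖ W r) * |ΔP r s| := by
        rw [← Finset.sum_add_distrib]
        gcongr with r
        rw [mul_comm, ← mul_add, Matrix.add_apply]
        refine mul_le_mul_of_nonneg_left ?_ (infNorm_nonneg _)
        exact (abs_add_le _ _).trans_eq (by rw [abs_of_nonneg (hPbar.1 r s)])
    _ < 1 := by linarith [h s]

/-- If `P = P̄ + ΔP`, with `P̄` row-stochastic, `ΔP` having zero row sums, and
`Σ_r α_r |Δp_{rs}| < 1 − Σ_r α_r p̄_{rs}` for all `s` where `α_r = ‖W_r ⊗ W_r‖_∞`,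
then `ρ((Pᵀ ⊗ I) diag(W_j ⊗ W_j)) < 1`. -/
theorem stmt4 {m n : ℕ} (Pbar ΔP : Matrix (Fin m) (Fin m) ℝ)
    (W : Fin m → Matrix (Fin n) (Fin n) ℝ)
    (hPbar : RowStochastic Pbar)
    (hΔ : ∀ r, ∑ s, ΔP r s = 0)
    (h : ∀ s, ∑ r, infNorm (W r ⊗ₖ W r) * |ΔP r s|
        < 1 - ∑ r, infNorm (W r ⊗ₖ W r) * Pbar r s) :
    specRad (bigM (Pbar + ΔP) W) < 1 :=
  stmt4_general Pbar ΔP W hPbar h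
end

section
/- Consider the scalar Markov jump linear system x(k+1) = a_{σ(k)} x(k) with a_1 = 1/2, a_2 = 5/4, and two-state Markov transition matrix P with rows (p_{11}, 1−p_{11}) and (p_{21}, 1−p_{21}). With nominal P̄ having rows (0.4, 0.6) and (0.5, 0.5), if |p_{11} − 0.4| ≤ 0.4 and |p_{21} − 0.5| ≤ 0.02, then ρ((Pᵀ ⊗ I) diag(a_j²)) ≤ 1, i.e., the spectral radius of the 2×2 matrix with entries M_{sr} = p_{rs} a_r² is at most 1. -/
/-!
A nonnegative matrix `A` with a positive weight `w` satisfying `wᵀ A ≤ r wᵀ` has spectral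
radius at most `r`: for an eigenvector `v`, weighting `|μ| |vᵢ| ≤ ∑ⱼ Aᵢⱼ |vⱼ|` by `wᵢ` and summing
gives `|μ| ∑ wᵢ |vᵢ| ≤ r ∑ wⱼ |vⱼ|`. Here `w = (1, 4)` and `r = 1` work on the whole box of
transition probabilities, the second column sum `p₂₁ a₂² + 4 (1 - p₂₁) a₂² ≤ 4` being exactly
`p₂₁ ≥ 0.48`. -/

open Matrix

namespace Matrix

variable {n : Type*} [Fintype n]

theorem exists_mulVec_eq_smul_of_isRoot_charpoly [DecidableEq n] {K : Type*} [Field K]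
    {A : Matrix n n K} {μ : K} (h : A.charpoly.IsRoot μ) : ∃ v ≠ 0, A *ᵥ v = μ • v := by
  have hdet : (scalar n μ - A).det = 0 := by rw [← eval_charpoly]; exact h
  obtain ⟨v, hv, hAv⟩ := exists_mulVec_eq_zero_iff.mpr hdet
  refine ⟨v, hv, ?_⟩
  rw [sub_mulVec, sub_eq_zero, scalar_apply, ← smul_one_eq_diagonal, smul_mulVec,
    one_mulVec] at hAv
  exact hAv.symm

theorem norm_le_of_mulVec_eq_smul_of_weighted_colSum_le {A : Matrix n n ℝ}
    (hA : ∀ i j, 0 ≤ A i j) {w : n → ℝ} (hw : ∀ i, 0 < w i) {r : ℝ}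
    (hwA : ∀ j, ∑ i, w i * A i j ≤ r * w j) {μ : ℂ} {v : n → ℂ} (hv : v ≠ 0)
    (hAv : A.map (algebraMap ℝ ℂ) *ᵥ v = μ • v) : ‖μ‖ ≤ r := by
  have hrow : ∀ i, ‖μ‖ * ‖v i‖ ≤ ∑ j, A i j * ‖v j‖ := by
    intro i
    calc ‖μ‖ * ‖v i‖ = ‖∑ j, (A i j : ℂ) * v j‖ := by
          rw [← norm_mul, ← smul_eq_mul, ← Pi.smul_apply, ← hAv]; rfl
      _ ≤ ∑ j, A i j * ‖v j‖ := by
          refine (norm_sum_le _ _).trans_eq (Finset.sum_congr rfl fun j _ => ?_)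
          rw [norm_mul, Complex.norm_real, Real.norm_of_nonneg (hA i j)]
  set s := ∑ i, w i * ‖v i‖
  have hs : 0 < s := by
    obtain ⟨k, hk⟩ := Function.ne_iff.mp hv
    exact (mul_pos (hw k) (norm_pos_iff.mpr hk)).trans_le <| Finset.single_le_sum
      (fun i _ => mul_nonneg (hw i).le (norm_nonneg _)) (Finset.mem_univ k)
  refine le_of_mul_le_mul_right ?_ hs
  calc ‖μ‖ * s = ∑ i, w i * (‖μ‖ * ‖v i‖) := by
        rw [Finset.mul_sum]; exact Finset.sum_congr rfl fun i _ => by ring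
    _ ≤ ∑ i, w i * ∑ j, A i j * ‖v j‖ :=
        Finset.sum_le_sum fun i _ => mul_le_mul_of_nonneg_left (hrow i) (hw i).le
    _ = ∑ j, (∑ i, w i * A i j) * ‖v j‖ := by
        simp_rw [Finset.mul_sum, Finset.sum_mul, mul_assoc]; exact Finset.sum_comm
    _ ≤ ∑ j, r * w j * ‖v j‖ :=
        Finset.sum_le_sum fun j _ => mul_le_mul_of_nonneg_right (hwA j) (norm_nonneg _)
    _ = r * s := by
        rw [Finset.mul_sum]; exact Finset.sum_congr rfl fun j _ => by ring

end Matrix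

theorem specRad_le_of_weighted_colSum_le {n : Type*} [Fintype n] [DecidableEq n]
    {A : Matrix n n ℝ} (hA : ∀ i j, 0 ≤ A i j) {w : n → ℝ} (hw : ∀ i, 0 < w i) {r : ℝ}
    (hr : 0 ≤ r) (hwA : ∀ j, ∑ i, w i * A i j ≤ r * w j) : specRad A ≤ r := by
  refine Real.sSup_le ?_ hr
  rintro _ ⟨μ, hμ, rfl⟩
  obtain ⟨v, hv, hAv⟩ := exists_mulVec_eq_smul_of_isRoot_charpoly hμ
  exact norm_le_of_mulVec_eq_smul_of_weighted_colSum_le hA hw hwA hv hAv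

theorem stmt13_general (p11 p21 : ℝ)
    (hb1 : |p11 - 0.4| ≤ 0.4) (hb2 : |p21 - 0.5| ≤ 0.02) :
    specRad !![p11 * ((1 : ℝ)/2)^2, p21 * ((5 : ℝ)/4)^2;
               (1 - p11) * ((1 : ℝ)/2)^2, (1 - p21) * ((5 : ℝ)/4)^2] ≤ 1 := by
  obtain ⟨hp11, hp11'⟩ := abs_le.mp hb1
  obtain ⟨hp21, hp21'⟩ := abs_le.mp hb2
  refine specRad_le_of_weighted_colSum_le (w := ![1, 4]) ?_ ?_ zero_le_one ?_
  · intro i j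
    fin_cases i <;> fin_cases j <;> simp <;> linarith
  · intro i
    fin_cases i <;> norm_num
  · intro j
    fin_cases j <;> simp [Fin.sum_univ_two] <;> linarith

/-- For the scalar two-mode MJLS with `a₁ = 1/2`, `a₂ = 5/4`, nominal transition matrix
with rows `(0.4, 0.6)`, `(0.5, 0.5)`, and perturbations `|p₁₁ − 0.4| ≤ 0.4`,
`|p₂₁ − 0.5| ≤ 0.02`, the 2×2 matrix `M` with `M_{sr} = p_{rs} a_r²` (i.e.
`(Pᵀ ⊗ I) diag(a_j²)`) has spectral radius at most `1`. -/
theorem stmt13 (p11 p21 : ℝ)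
    (h11 : 0 ≤ p11) (h11' : p11 ≤ 1) (h21 : 0 ≤ p21) (h21' : p21 ≤ 1)
    (hb1 : |p11 - 0.4| ≤ 0.4) (hb2 : |p21 - 0.5| ≤ 0.02) :
    specRad !![p11 * ((1 : ℝ)/2)^2, p21 * ((5 : ℝ)/4)^2;
               (1 - p11) * ((1 : ℝ)/2)^2, (1 - p21) * ((5 : ℝ)/4)^2] ≤ 1 :=
  stmt13_general p11 p21 hb1 hb2
end

section
/- Let M be the nm²×nm² matrix (Pᵀ ⊗ I_{n²}) diag(W_j ⊗ W_j) where P is m×m row-stochastic and W_j ∈ ℝ^{n×n}. If ρ(M) < 1, then for the Markov jump linear system x(k+1) = W_{σ(k)} x(k) driven by a Markov chain with transition matrix P and any initial distribution, E[‖x(k)‖²] → 0 as k → ∞ for every deterministic initial state x(0). -/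
open Matrix Kronecker Filter

/-- Product of mode matrices along a path: `prodW W k q = W_{q(k-1)} ⋯ W_{q(1)} W_{q(0)}`,
so that `x(k) = prodW W k q • x(0)` for the system `x(k+1) = W_{σ(k)} x(k)` along path `q`. -/
def prodW {m n : ℕ} (W : Fin m → Matrix (Fin n) (Fin n) ℝ) :
    (k : ℕ) → (Fin (k + 1) → Fin m) → Matrix (Fin n) (Fin n) ℝ
  | 0, _ => 1
  | k + 1, q => W (q (Fin.last k).castSucc) * prodW W k (fun i => q i.castSucc)

/-- Probability of a mode path of the Markov chain with initial distribution `π₀`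
and transition matrix `P`. -/
def pathProb {m : ℕ} (P : Matrix (Fin m) (Fin m) ℝ) (π₀ : Fin m → ℝ) {k : ℕ}
    (q : Fin (k + 1) → Fin m) : ℝ :=
  π₀ (q 0) * ∏ i : Fin k, P (q i.castSucc) (q i.succ)

/-!
The vectorised conditional second moments `Q_s(k) = E[x(k) x(k)ᵀ 1{σ(k) = s}]` satisfy the
linear recursion `Q(k+1) = M Q(k)`, because one step of the chain from mode `r` multiplies
`x xᵀ` by `W_r ⊗ W_r` and moves to mode `s` with probability `p_{rs}`. Hence `Q(k) = Mᵏ Q(0)`;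
Gelfand's formula turns `ρ(M) < 1` into `Mᵏ → 0`, and `E[‖x(k)‖²] = ∑_s tr Q_s(k) → 0`.
-/

open scoped NNReal ENNReal Topology

theorem tendsto_pow_atTop_nhds_zero_of_spectralRadius_lt_one {A : Type*} [NormedRing A]
    [NormedAlgebra ℂ A] [CompleteSpace A] {a : A} (ha : spectralRadius ℂ a < 1) :
    Tendsto (fun n : ℕ => a ^ n) atTop (𝓝 0) := by
  obtain ⟨c, hρc, hc1⟩ := ENNReal.lt_iff_exists_nnreal_btwn.mp ha
  have hgelfand := spectrum.pow_nnnorm_pow_one_div_tendsto_nhds_spectralRadius a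
  have hbound : ∀ᶠ n : ℕ in atTop, ‖a ^ n‖₊ ≤ c ^ n := by
    filter_upwards [hgelfand.eventually_lt_const hρc, eventually_ge_atTop 1] with n hn hn1
    have hn0 : (n : ℝ) ≠ 0 := by positivity
    have hlt : (‖a ^ n‖₊ : ℝ≥0∞) < (c : ℝ≥0∞) ^ n :=
      calc (‖a ^ n‖₊ : ℝ≥0∞) = ((‖a ^ n‖₊ : ℝ≥0∞) ^ (1 / n : ℝ)) ^ n := by
            rw [← ENNReal.rpow_natCast, ← ENNReal.rpow_mul, one_div_mul_cancel hn0,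
              ENNReal.rpow_one]
        _ < (c : ℝ≥0∞) ^ n := ENNReal.pow_lt_pow_left (by omega) hn
    exact_mod_cast hlt.le
  refine squeeze_zero_norm' (hbound.mono fun n hn => ?_)
    (tendsto_pow_atTop_nhds_zero_of_lt_one c.2 (by exact_mod_cast hc1))
  exact_mod_cast hn

section SpectralRadius

variable {ι : Type*} [Fintype ι] [DecidableEq ι]

attribute [local instance] Matrix.linftyOpNormedRing Matrix.linftyOpNormedAlgebra

theorem spectralRadius_map_le_specRad (A : Matrix ι ι ℝ) :
    spectralRadius ℂ (A.map (algebraMap ℝ ℂ)) ≤ ENNReal.ofReal (specRad A) := by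
  have hroots : {r : ℝ | ∃ μ : ℂ, (A.map (algebraMap ℝ ℂ)).charpoly.IsRoot μ ∧ r = ‖μ‖}.Finite :=
    ((A.map (algebraMap ℝ ℂ)).charpoly.roots.toFinset.finite_toSet.image (‖·‖)).subset
      fun r ⟨μ, hμ, hr⟩ => ⟨μ, by simpa [(charpoly_monic _).ne_zero] using hμ, hr.symm⟩
  refine iSup₂_le fun μ hμ => ?_
  rw [← ENNReal.ofReal_coe_nnreal, coe_nnnorm]
  exact ENNReal.ofReal_le_ofReal <| le_csSup hroots.bddAbove
    ⟨μ, mem_spectrum_iff_isRoot_charpoly.mp hμ, rfl⟩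

theorem tendsto_pow_atTop_nhds_zero_of_specRad_lt_one {A : Matrix ι ι ℝ} (hA : specRad A < 1) :
    Tendsto (fun n : ℕ => A ^ n) atTop (𝓝 0) := by
  have hρ : spectralRadius ℂ (A.map (algebraMap ℝ ℂ)) < 1 :=
    (spectralRadius_map_le_specRad A).trans_lt (by simpa using hA)
  have hre : Continuous fun B : Matrix ι ι ℂ => B.map Complex.re :=
    continuous_id.matrix_map Complex.continuous_re
  have := (hre.tendsto 0).comp (tendsto_pow_atTop_nhds_zero_of_spectralRadius_lt_one hρ)
  convert this using 2 with n
  · rw [Function.comp_apply, ← RingHom.mapMatrix_apply, ← map_pow, RingHom.mapMatrix_apply,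
      Matrix.map_map]
    ext i j; simp
  · simp

end SpectralRadius

theorem kronecker_mulVec_mul {ι κ α β R : Type*} [Fintype κ] [Fintype β] [CommSemiring R]
    (A : Matrix ι κ R) (B : Matrix α β R) (x : κ → R) (y : β → R) :
    (A ⊗ₖ B) *ᵥ (fun p => x p.1 * y p.2) = fun p => (A *ᵥ x) p.1 * (B *ᵥ y) p.2 := by
  ext ⟨i, a⟩
  simp only [mulVec, dotProduct, kroneckerMap_apply, Fintype.sum_prod_type, Finset.sum_mul_sum]
  exact Finset.sum_congr rfl fun _ _ => Finset.sum_congr rfl fun _ _ => by ring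

section SecondMoment

variable {m n : ℕ} (P : Matrix (Fin m) (Fin m) ℝ) (π₀ : Fin m → ℝ)
  (W : Fin m → Matrix (Fin n) (Fin n) ℝ) (x0 : Fin n → ℝ)

theorem bigM_mulVec_apply (v : Fin m × (Fin n × Fin n) → ℝ) (s : Fin m) (ab : Fin n × Fin n) :
    (bigM P W *ᵥ v) (s, ab) = ∑ r, P r s * ((W r ⊗ₖ W r) *ᵥ fun cd => v (r, cd)) ab := by
  simp only [mulVec, dotProduct, bigM, of_apply, Finset.mul_sum, mul_assoc]
  exact Fintype.sum_prod_type _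

theorem pathProb_snoc {k : ℕ} (q : Fin (k + 1) → Fin m) (r : Fin m) :
    pathProb P π₀ (Fin.snoc q r) = pathProb P π₀ q * P (q (Fin.last k)) r := by
  simp only [pathProb, Fin.prod_univ_castSucc, Fin.snoc_castSucc, Fin.succ_castSucc,
    Fin.succ_last, Fin.snoc_last, mul_assoc]
  rw [← Fin.castSucc_zero, Fin.snoc_castSucc]

theorem prodW_snoc {k : ℕ} (q : Fin (k + 1) → Fin m) (r : Fin m) :
    prodW W (k + 1) (Fin.snoc q r) = W (q (Fin.last k)) * prodW W k q := by
  simp only [prodW, Fin.snoc_castSucc]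

/-- The contribution of the mode path `q` to `vec E[x(k) x(k)ᵀ 1{σ(k) = s}]`, stacked over `s`
as in `bigM`. -/
def pathMoment {k : ℕ} (q : Fin (k + 1) → Fin m) : Fin m × (Fin n × Fin n) → ℝ :=
  fun p => if q (Fin.last k) = p.1 then
    pathProb P π₀ q * ((prodW W k q *ᵥ x0) p.2.1 * (prodW W k q *ᵥ x0) p.2.2) else 0

def secondMoment (k : ℕ) : Fin m × (Fin n × Fin n) → ℝ :=
  ∑ q : Fin (k + 1) → Fin m, pathMoment P π₀ W x0 q

theorem sum_pathMoment_snoc {k : ℕ} (q : Fin (k + 1) → Fin m) :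
    ∑ r, pathMoment P π₀ W x0 (Fin.snoc q r) = bigM P W *ᵥ pathMoment P π₀ W x0 q := by
  set y := prodW W k q *ᵥ x0
  set x := W (q (Fin.last k)) *ᵥ y
  have hblock : ∀ r, (fun cd => pathMoment P π₀ W x0 q (r, cd)) =
      if q (Fin.last k) = r then pathProb P π₀ q • fun cd => y cd.1 * y cd.2 else 0 := by
    intro r
    by_cases hr : q (Fin.last k) = r <;> ext <;> simp [pathMoment, hr, y]
  ext ⟨s, a, b⟩
  calc (∑ r, pathMoment P π₀ W x0 (Fin.snoc q r)) (s, a, b)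
      = pathProb P π₀ q * P (q (Fin.last k)) s * (x a * x b) := by
        simp [Finset.sum_apply, pathMoment, pathProb_snoc, prodW_snoc, ← mulVec_mulVec, x, y]
    _ = (bigM P W *ᵥ pathMoment P π₀ W x0 q) (s, a, b) := by
        rw [bigM_mulVec_apply, Finset.sum_eq_single (q (Fin.last k))
          (fun r _ hr => by simp [hblock, Ne.symm hr]) (by simp), hblock, if_pos rfl,
          mulVec_smul, kronecker_mulVec_mul]
        simp only [Pi.smul_apply, smul_eq_mul, x]
        ring

theorem secondMoment_succ (k : ℕ) :
    secondMoment P π₀ W x0 (k + 1) = bigM P W *ᵥ secondMoment P π₀ W x0 k := by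
  rw [secondMoment, secondMoment, mulVec_sum,
    ← (Fin.snocEquiv fun _ => Fin m).sum_comp, Fintype.sum_prod_type_right]
  exact Finset.sum_congr rfl fun q _ => sum_pathMoment_snoc P π₀ W x0 q

theorem secondMoment_eq_pow_mulVec (k : ℕ) :
    secondMoment P π₀ W x0 k = bigM P W ^ k *ᵥ secondMoment P π₀ W x0 0 := by
  induction k with
  | zero => rw [pow_zero, one_mulVec]
  | succ k ih => rw [secondMoment_succ, ih, mulVec_mulVec, pow_succ']

theorem sum_pathProb_mul_sum_sq_eq_sum_secondMoment (k : ℕ) :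
    ∑ q : Fin (k + 1) → Fin m, pathProb P π₀ q * ∑ a, ((prodW W k q) *ᵥ x0) a ^ 2 =
      ∑ s, ∑ a, secondMoment P π₀ W x0 k (s, a, a) := by
  simp only [secondMoment, Finset.sum_apply, pathMoment]
  conv_rhs => enter [2, s]; rw [Finset.sum_comm]
  rw [Finset.sum_comm]
  refine Finset.sum_congr rfl fun q _ => ?_
  simp [Finset.mul_sum, sq]

end SecondMoment

theorem stmt17_general {m n : ℕ} (P : Matrix (Fin m) (Fin m) ℝ) (π₀ : Fin m → ℝ)
    (W : Fin m → Matrix (Fin n) (Fin n) ℝ)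
    (hρ : specRad (bigM P W) < 1) :
    ∀ x0 : Fin n → ℝ,
      Tendsto (fun k => ∑ q : Fin (k + 1) → Fin m,
          pathProb P π₀ q * ∑ a, ((prodW W k q).mulVec x0 a) ^ 2)
        atTop (nhds 0) := by
  intro x0
  have hmoment : Tendsto (secondMoment P π₀ W x0) atTop (𝓝 0) := by
    rw [funext (secondMoment_eq_pow_mulVec P π₀ W x0)]
    simpa [Function.comp_def] using
      ((continuous_id.matrix_mulVec continuous_const).tendsto 0).comp
        (tendsto_pow_atTop_nhds_zero_of_specRad_lt_one hρ)
  simp_rw [sum_pathProb_mul_sum_sq_eq_sum_secondMoment]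
  simpa using tendsto_finsetSum _ fun s _ =>
    tendsto_finsetSum _ fun a _ => tendsto_pi_nhds.1 hmoment (s, a, a)

/-- If `ρ((Pᵀ ⊗ I) diag(W_j ⊗ W_j)) < 1`, then the Markov jump linear system
`x(k+1) = W_{σ(k)} x(k)` is mean square stable: for any initial distribution `π₀` and any
deterministic initial state `x0`, `E[‖x(k)‖²] → 0`, the expectation being written as a sum
over mode paths. -/
theorem stmt17 {m n : ℕ} (P : Matrix (Fin m) (Fin m) ℝ) (π₀ : Fin m → ℝ)
    (W : Fin m → Matrix (Fin n) (Fin n) ℝ)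
    (hP : RowStochastic P) (hπ₀ : (∀ s, 0 ≤ π₀ s) ∧ ∑ s, π₀ s = 1)
    (hρ : specRad (bigM P W) < 1) :
    ∀ x0 : Fin n → ℝ,
      Tendsto (fun k => ∑ q : Fin (k + 1) → Fin m,
          pathProb P π₀ q * ∑ a, ((prodW W k q).mulVec x0 a) ^ 2)
        atTop (nhds 0) :=
  stmt17_general P π₀ W hρ
end
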